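/- For every rational t with t ∉ {-1, 0, 1}, the rationals a = 18t(t-1)(t+1)/((t^2-6t+1)(t^2+6t+1)), b = (t-1)(t^2+6t+1)^2/(6t(t+1)(t^2-6t+1)), c = (t+1)(t^2-6t+1)^2/(6t(t-1)(t^2+6t+1)) satisfy the identity -a^4b^2c^2 + 2a^3b^3c^2 + 2a^3b^2c^3 - a^2b^4c^2 + 2a^2b^3c^3 - a^2b^2c^4 + 12a^2b^2c^2 + 6a^2bc + 6ab^2c + 6abc^2 + 4ab + 4ac + 4bc + 3 = 0. -/

import Mathlib

/-!
The left-hand side, rewritten in the pairwise products `ab, ac, bc`, is the value at `x = 1` of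
the 3-division polynomial `ψ₃` of `y² = (x + ab)(x + ac)(x + bc)`, so it vanishes exactly when
the point with `x = 1` has order 3. Along the parametrisation the pairwise products become simple
rational functions of `t`, with denominators built from `t`, `t² - 6t + 1` and `t² + 6t + 1`;
the last two have no rational root since their discriminant `32` is not a rational square, and
then `ψ₃(1) = 0` is a polynomial identity in `t`.
-/

theorem sq_sub_six_mul_add_one_ne_zero (t : ℚ) : t ^ 2 - 6 * t + 1 ≠ 0 := by
  intro h
  have h2 : IsSquare (2 : ℚ) := ⟨(t - 3) / 2, by linear_combination -h / 4⟩
  norm_num at h2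

theorem sq_add_six_mul_add_one_ne_zero (t : ℚ) : t ^ 2 + 6 * t + 1 ≠ 0 := by
  simpa using sq_sub_six_mul_add_one_ne_zero (-t)

/-- `y² = (x + u)(x + v)(x + w)`. -/
def productCurve {R : Type*} [CommRing R] (u v w : R) : WeierstrassCurve R :=
  { a₁ := 0, a₂ := u + v + w, a₃ := 0, a₄ := u * v + u * w + v * w, a₆ := u * v * w }

theorem eval_one_Ψ₃_productCurve {R : Type*} [CommRing R] (u v w : R) :
    (productCurve u v w).Ψ₃.eval 1 =
      3 + 4 * (u + v + w) + 6 * (u * v + u * w + v * w) + 12 * (u * v * w)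
        + 4 * (u + v + w) * (u * v * w) - (u * v + u * w + v * w) ^ 2 := by
  simp [WeierstrassCurve.Ψ₃, WeierstrassCurve.b₂, WeierstrassCurve.b₄, WeierstrassCurve.b₆,
    WeierstrassCurve.b₈, productCurve]
  ring

theorem order_three_condition_eq_eval_one_Ψ₃ {R : Type*} [CommRing R] (a b c : R) :
    -a^4*b^2*c^2 + 2*a^3*b^3*c^2 + 2*a^3*b^2*c^3 - a^2*b^4*c^2 + 2*a^2*b^3*c^3
      - a^2*b^2*c^4 + 12*a^2*b^2*c^2 + 6*a^2*b*c + 6*a*b^2*c + 6*a*b*c^2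
      + 4*a*b + 4*a*c + 4*b*c + 3 = (productCurve (a * b) (a * c) (b * c)).Ψ₃.eval 1 := by
  rw [eval_one_Ψ₃_productCurve]
  ring

theorem parametric_pairwise_products {t a b c : ℚ} (htm : t ≠ -1) (ht0 : t ≠ 0) (htp : t ≠ 1)
    (hA : a = 18*t*(t-1)*(t+1) / ((t^2-6*t+1)*(t^2+6*t+1)))
    (hB : b = (t-1)*(t^2+6*t+1)^2 / (6*t*(t+1)*(t^2-6*t+1)))
    (hC : c = (t+1)*(t^2-6*t+1)^2 / (6*t*(t-1)*(t^2+6*t+1))) :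
    a * b = 3 * (t - 1) ^ 2 * (t ^ 2 + 6 * t + 1) / (t ^ 2 - 6 * t + 1) ^ 2 ∧
    a * c = 3 * (t + 1) ^ 2 * (t ^ 2 - 6 * t + 1) / (t ^ 2 + 6 * t + 1) ^ 2 ∧
    b * c = (t ^ 2 - 6 * t + 1) * (t ^ 2 + 6 * t + 1) / (36 * t ^ 2) := by
  have htm' : t + 1 ≠ 0 := by contrapose! htm; linear_combination htm
  have htp' : t - 1 ≠ 0 := sub_ne_zero.mpr htp
  have hM := sq_sub_six_mul_add_one_ne_zero t
  have hP := sq_add_six_mul_add_one_ne_zero t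
  generalize t ^ 2 - 6 * t + 1 = M at *
  generalize t ^ 2 + 6 * t + 1 = P at *
  subst hA hB hC
  refine ⟨?_, ?_, ?_⟩ <;> field_simp <;> ring

theorem eval_one_Ψ₃_parametric {t : ℚ} (ht0 : t ≠ 0) :
    (productCurve (3 * (t - 1) ^ 2 * (t ^ 2 + 6 * t + 1) / (t ^ 2 - 6 * t + 1) ^ 2)
      (3 * (t + 1) ^ 2 * (t ^ 2 - 6 * t + 1) / (t ^ 2 + 6 * t + 1) ^ 2)
      ((t ^ 2 - 6 * t + 1) * (t ^ 2 + 6 * t + 1) / (36 * t ^ 2))).Ψ₃.eval 1 = 0 := by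
  have hM := sq_sub_six_mul_add_one_ne_zero t
  have hP := sq_add_six_mul_add_one_ne_zero t
  rw [eval_one_Ψ₃_productCurve]
  generalize hMdef : t ^ 2 - 6 * t + 1 = M at *
  generalize hPdef : t ^ 2 + 6 * t + 1 = P at *
  field_simp
  subst hMdef hPdef
  ring

theorem parametric_triple_order3_condition (t : ℚ)
    (ht : t ≠ -1 ∧ t ≠ 0 ∧ t ≠ 1)
    (a b c : ℚ)
    (hA : a = 18*t*(t-1)*(t+1) / ((t^2-6*t+1)*(t^2+6*t+1)))
    (hB : b = (t-1)*(t^2+6*t+1)^2 / (6*t*(t+1)*(t^2-6*t+1)))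
    (hC : c = (t+1)*(t^2-6*t+1)^2 / (6*t*(t-1)*(t^2+6*t+1))) :
    -a^4*b^2*c^2 + 2*a^3*b^3*c^2 + 2*a^3*b^2*c^3 - a^2*b^4*c^2 + 2*a^2*b^3*c^3
      - a^2*b^2*c^4 + 12*a^2*b^2*c^2 + 6*a^2*b*c + 6*a*b^2*c + 6*a*b*c^2
      + 4*a*b + 4*a*c + 4*b*c + 3 = 0 := by
  obtain ⟨htm, ht0, htp⟩ := ht
  obtain ⟨hab, hac, hbc⟩ := parametric_pairwise_products htm ht0 htp hA hB hC
  rw [order_three_condition_eq_eval_one_Ψ₃, hab, hac, hbc]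
  exact eval_one_Ψ₃_parametric ht0
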